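/- Let Hⁿ ⊆ kF_X^a denote the k-span of angularly decorated rooted forests with at most n + 1 vertices (n ≥ 0). Then the bialgebra (kF_X^a, ⋄_a, u, Δ_a, ε_a) is connected cofiltered with respect to this filtration: (a) Hⁿ ⊆ Hⁿ⁺¹ for all n ≥ 0; (b) kF_X^a = ⋃_{n≥0} Hⁿ; (c) Δ_a(Hⁿ) ⊆ Σ_{p+q=n} (image of H^p ⊗ H^q in kF_X^a ⊗ kF_X^a) for all n ≥ 0; (d) Hⁿ = im(u) ⊕ (Hⁿ ∩ ker ε_a) for all n ≥ 0; and (e) H⁰ = im(u) = k•. -/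

import Mathlib

set_option linter.unreachableTactic false
set_option linter.unnecessarySeqFocus false
set_option linter.unusedTactic false

/-! Angularly decorated planar rooted trees and forests over a decoration set `X`.
A tree is either the single-vertex tree `•` (leaf) or the grafting `B⁺(F)` of a forest;
a forest is an alternating word `T₁ x₁ T₂ x₂ ⋯ x_{ℓ-1} T_ℓ` of trees and decorations. -/
mutual
  inductive ATree (X : Type) : Type
    | leaf : ATree X
    | graft : AForest X → ATree X
  inductive AForest (X : Type) : Type
    | single : ATree X → AForest X
    | cons : ATree X → X → AForest X → AForest X
end

mutual
  /-- Depth of an angularly decorated tree. -/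
  def ATree.depth {X : Type} : ATree X → ℕ
    | .leaf => 0
    | .graft F => AForest.depth F + 1
  /-- Depth of an angularly decorated forest. -/
  def AForest.depth {X : Type} : AForest X → ℕ
    | .single T => ATree.depth T
    | .cons T _ F => max (ATree.depth T) (AForest.depth F)
end

mutual
  /-- An auxiliary size of an angularly decorated tree. -/
  def ATree.size {X : Type} : ATree X → ℕ
    | .leaf => 1
    | .graft F => AForest.size F + 1
  /-- An auxiliary size of an angularly decorated forest. -/
  def AForest.size {X : Type} : AForest X → ℕ
    | .single T => ATree.size T + 1
    | .cons T _ F => ATree.size T + AForest.size F + 1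
end

mutual
  /-- The number of vertices of an angularly decorated tree. -/
  def ATree.deg {X : Type} : ATree X → ℕ
    | .leaf => 1
    | .graft F => AForest.deg F + 1
  /-- The number of vertices of an angularly decorated forest. -/
  def AForest.deg {X : Type} : AForest X → ℕ
    | .single T => ATree.deg T
    | .cons T _ F => ATree.deg T + AForest.deg F
end

/-- Auxiliary lemma for termination proofs. -/
theorem natlex_of_le_of_lt {a₁ a₂ b₁ b₂ : ℕ} (h1 : a₁ ≤ a₂) (h2 : b₁ < b₂) :
    Prod.Lex (fun x y : ℕ => x < y) (fun x y : ℕ => x < y) (a₁, b₁) (a₂, b₂) := by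
  rcases lt_or_eq_of_le h1 with h | rfl
  · exact Prod.Lex.left _ _ h
  · exact Prod.Lex.right _ h2

/-- `RBF k X` is the free `k`-module on the set of angularly decorated rooted forests. -/
abbrev RBF (k X : Type) [CommRing k] := AForest X →₀ k

mutual
  /-- The product `⋄ₐ` on basis trees (with values in the free module on trees). -/
  noncomputable def mulT {k X : Type} [CommRing k] (lam : k) :
      ATree X → ATree X → (ATree X →₀ k)
    | .leaf, T' => Finsupp.single T' 1
    | T, .leaf => Finsupp.single T 1
    | .graft F, .graft F' =>
        Finsupp.mapDomain ATree.graft (mulF lam (.single (.graft F)) F')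
          + Finsupp.mapDomain ATree.graft (mulF lam F (.single (.graft F')))
          + lam • Finsupp.mapDomain ATree.graft (mulF lam F F')
  termination_by T T' => (ATree.depth T + ATree.depth T', ATree.size T + ATree.size T')
  decreasing_by
    all_goals
      first
        | (apply Prod.Lex.left
           simp [ATree.depth, AForest.depth] <;> omega)
        | (apply natlex_of_le_of_lt <;>
            simp [ATree.depth, AForest.depth, ATree.size, AForest.size] <;>
            omega)
  /-- The product `⋄ₐ` on basis forests. -/
  noncomputable def mulF {k X : Type} [CommRing k] (lam : k) :
      AForest X → AForest X → RBF k X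
    | .single T, .single T' => Finsupp.mapDomain AForest.single (mulT lam T T')
    | .single T, .cons T' y G' =>
        Finsupp.mapDomain (fun t => AForest.cons t y G') (mulT lam T T')
    | .cons T x G, F' => Finsupp.mapDomain (fun g => AForest.cons T x g) (mulF lam G F')
  termination_by F F' => (AForest.depth F + AForest.depth F', AForest.size F + AForest.size F')
  decreasing_by
    all_goals
      first
        | (apply Prod.Lex.left
           simp [ATree.depth, AForest.depth] <;> omega)
        | (apply natlex_of_le_of_lt <;>
            simp [ATree.depth, AForest.depth, ATree.size, AForest.size] <;>
            omega)
end

open scoped TensorProduct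

variable {k X : Type} [CommRing k]

/-- The unit `•` of the Rota-Baxter algebra `kF_X^a`: the single-vertex tree. -/
noncomputable def RBF.one : RBF k X := Finsupp.single (AForest.single ATree.leaf) 1

/-- The canonical basis inclusion of forests into `kF_X^a`. -/
noncomputable def RBF.of (F : AForest X) : RBF k X := Finsupp.single F 1

/-- The natural map `i_X : X → kF_X^a`, `x ↦ • x •`. -/
noncomputable def RBF.iX (x : X) : RBF k X :=
  RBF.of (AForest.cons ATree.leaf x (AForest.single ATree.leaf))

/-- The grafting operator `B⁺` as a `k`-linear operator on `kF_X^a`. -/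
noncomputable def RBF.Bplus : RBF k X →ₗ[k] RBF k X :=
  Finsupp.lmapDomain k k (fun F => AForest.single (ATree.graft F))

/-- The multiplication `⋄ₐ` on `kF_X^a` as a `k`-bilinear map. -/
noncomputable def RBF.mul (lam : k) : RBF k X →ₗ[k] RBF k X →ₗ[k] RBF k X :=
  Finsupp.lift _ k _ fun F => Finsupp.lift _ k _ fun F' => mulF lam F F'

/-- Concatenation of two forests with the angle between them decorated by `x`. -/
def concatA (x : X) : AForest X → AForest X → AForest X
  | .single T, F' => .cons T x F'
  | .cons T y G, F' => .cons T y (concatA x G F')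

/-- Concatenation with middle angle decorated by `x`, as a bilinear map on `kF_X^a`. -/
noncomputable def RBF.concat (x : X) : RBF k X →ₗ[k] RBF k X →ₗ[k] RBF k X :=
  Finsupp.lift _ k _ fun F => Finsupp.lift _ k _ fun F' => RBF.of (concatA x F F')

/-- Given two bilinear maps `f g` on a module `M`, the bilinear map on `M ⊗ M` sending
`(a ⊗ b, c ⊗ d)` to `f a c ⊗ g b d`. -/
noncomputable def mixMap {M : Type} [AddCommGroup M] [Module k M]
    (f g : M →ₗ[k] M →ₗ[k] M) :
    (M ⊗[k] M) →ₗ[k] (M ⊗[k] M) →ₗ[k] (M ⊗[k] M) :=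
  TensorProduct.curry
    ((TensorProduct.map (TensorProduct.lift f) (TensorProduct.lift g)).comp
      (TensorProduct.tensorTensorTensorComm k M M M M).toLinearMap)

mutual
  /-- The angular coproduct of a basis tree: the sum of `cl(H) ⊗ T/H` over all
  subforests `H ⊑ T` (sequences of mutually disjoint full subtrees and bare angular
  decorations in planar order). -/
  noncomputable def coT (lam : k) : ATree X → RBF k X ⊗[k] RBF k X
    | .leaf => RBF.one ⊗ₜ[k] RBF.one
    | .graft F => (RBF.of (AForest.single (ATree.graft F))) ⊗ₜ[k] RBF.one
        + (LinearMap.lTensor (RBF k X) RBF.Bplus) (coF lam F)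
  /-- The angular coproduct of a basis forest: the sum of `cl(H) ⊗ F/H` over all
  subforests `H ⊑ F`. -/
  noncomputable def coF (lam : k) : AForest X → RBF k X ⊗[k] RBF k X
    | .single T => coT lam T
    | .cons T x G =>
        mixMap (RBF.concat x) (RBF.mul lam) (coT lam T) (coF lam G)
          + mixMap (RBF.mul lam) (RBF.concat x) (coT lam T) (coF lam G)
end

/-- The angular coproduct `Δₐ : kF_X^a → kF_X^a ⊗ kF_X^a`,
`Δₐ(F) = Σ_{H ⊑ F} cl(H) ⊗ F/H`. -/
noncomputable def RBF.Delta (lam : k) : RBF k X →ₗ[k] RBF k X ⊗[k] RBF k X :=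
  Finsupp.lift _ k _ fun F => coF lam F

/-- The counit `εₐ : kF_X^a → k` sending the single-vertex tree `•` to `1` and every
other forest to `0`. -/
noncomputable def RBF.eps : RBF k X →ₗ[k] k :=
  Finsupp.lift _ k _ fun F =>
    match F with
    | .single .leaf => (1 : k)
    | _ => 0

/-- The unit map `u : k → kF_X^a`, `c ↦ c •`. -/
noncomputable def RBF.unit : k →ₗ[k] RBF k X :=
  LinearMap.toSpanSingleton k (RBF k X) RBF.one

/-- The `k`-submodule of `kF_X^a` spanned by the angularly decorated rooted forests
with at most `n + 1` vertices. -/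
noncomputable def RBF.filtration (k X : Type) [CommRing k] (n : ℕ) :
    Submodule k (RBF k X) :=
  Submodule.span k {a : RBF k X | ∃ F : AForest X, AForest.deg F ≤ n + 1 ∧ a = RBF.of F}

/-! Read along the recursion defining `Δₐ` (`coT`, `coF`), every summand `cl(H) ⊗ F/H` of
`Δₐ(F)` has at most `deg F + 1` vertices in its two factors together: `• ⊗ •` has two, `B⁺`
adds one vertex to one factor, and for `F = T x G` the two coproducts are combined by
concatenation (vertex counts add) in one factor and by `⋄ₐ` (which merges two roots) in the
other. This is exactly `Δₐ(Hⁿ) ⊆ Σ_{p+q=n} Hᵖ ⊗ H^q`. The splitting (d) comes from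
`εₐ ∘ u = id`, and `H⁰ = k•` because `•` is the only forest with one vertex. -/

open Finset

section TensorFiltration

variable {R M : Type*} [CommSemiring R] [AddCommMonoid M] [Module R M]

noncomputable def tensorFiltration (H : ℕ → Submodule R M) (n : ℕ) : Submodule R (M ⊗[R] M) :=
  ∑ pq ∈ antidiagonal n, Submodule.map₂ (TensorProduct.mk R M M) (H pq.1) (H pq.2)

variable {H : ℕ → Submodule R M}

theorem tmul_mem_tensorFiltration {p q n : ℕ} (h : p + q = n) {a b : M} (ha : a ∈ H p)
    (hb : b ∈ H q) : a ⊗ₜ[R] b ∈ tensorFiltration H n := by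
  have hpq : (p, q) ∈ antidiagonal n := mem_antidiagonal.2 h
  exact single_le_sum_of_canonicallyOrdered
    (f := fun pq => Submodule.map₂ (TensorProduct.mk R M M) (H pq.1) (H pq.2)) hpq
    (Submodule.apply_mem_map₂ _ ha hb)

theorem tensorFiltration_le_iff {n : ℕ} {N : Submodule R (M ⊗[R] M)} :
    tensorFiltration H n ≤ N ↔
      ∀ p q, p + q = n → ∀ a ∈ H p, ∀ b ∈ H q, a ⊗ₜ[R] b ∈ N := by
  refine ⟨fun h p q hpq a ha b hb => h (tmul_mem_tensorFiltration hpq ha hb), fun h => ?_⟩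
  refine Finset.sum_induction _ (· ≤ N) (fun _ _ => sup_le) bot_le fun pq hpq => ?_
  exact Submodule.map₂_le.2 fun a ha b hb => h _ _ (mem_antidiagonal.1 hpq) a ha b hb

theorem tensorFiltration_mono (hH : Monotone H) : Monotone (tensorFiltration H) := by
  intro m n hmn
  refine tensorFiltration_le_iff.2 fun p q hpq a ha b hb => ?_
  exact tmul_mem_tensorFiltration (p := p + (n - m)) (by omega) (hH (by omega) ha) hb

theorem lTensor_mem_tensorFiltration {g : M →ₗ[R] M} {i : ℕ}
    (hg : ∀ q, ∀ b ∈ H q, g b ∈ H (q + i)) {n : ℕ} {x : M ⊗[R] M}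
    (hx : x ∈ tensorFiltration H n) : g.lTensor M x ∈ tensorFiltration H (n + i) := by
  refine tensorFiltration_le_iff (N := (tensorFiltration H (n + i)).comap (g.lTensor M))
    |>.2 (fun p q hpq a ha b hb => ?_) hx
  exact tmul_mem_tensorFiltration (by omega) ha (hg q b hb)

end TensorFiltration

theorem mixMap_tmul {M : Type} [AddCommGroup M] [Module k M] (f g : M →ₗ[k] M →ₗ[k] M)
    (a b c d : M) : mixMap f g (a ⊗ₜ[k] b) (c ⊗ₜ[k] d) = f a c ⊗ₜ[k] g b d := by
  simp [mixMap]

theorem mixMap_mem_tensorFiltration {M : Type} [AddCommGroup M] [Module k M]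
    {H : ℕ → Submodule k M} {f g : M →ₗ[k] M →ₗ[k] M} {i j : ℕ}
    (hf : ∀ p r, ∀ a ∈ H p, ∀ c ∈ H r, f a c ∈ H (p + r + i))
    (hg : ∀ q s, ∀ b ∈ H q, ∀ d ∈ H s, g b d ∈ H (q + s + j))
    {m n : ℕ} {x y : M ⊗[k] M} (hx : x ∈ tensorFiltration H m)
    (hy : y ∈ tensorFiltration H n) :
    mixMap f g x y ∈ tensorFiltration H (m + n + i + j) := by
  refine tensorFiltration_le_iff (N := (tensorFiltration H _).comap ((mixMap f g).flip y))
    |>.2 (fun p q hpq a ha b hb => ?_) hx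
  refine tensorFiltration_le_iff (N := (tensorFiltration H _).comap (mixMap f g (a ⊗ₜ b)))
    |>.2 (fun r s hrs c hc d hd => ?_) hy
  rw [Submodule.mem_comap, mixMap_tmul]
  exact tmul_mem_tensorFiltration (by omega) (hf p r a ha c hc) (hg q s b hb d hd)

theorem Finsupp.mapDomain_mem_supported {R α β : Type*} [Semiring R] {f : α → β}
    {s : Set α} {t : Set β} (hst : Set.MapsTo f s t) {l : α →₀ R}
    (hl : l ∈ Finsupp.supported R R s) : Finsupp.mapDomain f l ∈ Finsupp.supported R R t :=
  Finsupp.supported_comap_lmapDomain R R f t (Finsupp.supported_mono hst.subset_preimage hl)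

theorem LinearMap.isCompl_range_ker_of_leftInverse {R M N : Type*} [Ring R] [AddCommGroup M]
    [Module R M] [AddCommGroup N] [Module R N] {u : N →ₗ[R] M} {ε : M →ₗ[R] N}
    (h : ∀ c, ε (u c) = c) : IsCompl (LinearMap.range u) (LinearMap.ker ε) := by
  refine ⟨Submodule.disjoint_def.2 ?_, codisjoint_iff.2 (eq_top_iff.2 fun a _ => ?_)⟩
  · rintro _ ⟨c, rfl⟩ hc
    rw [LinearMap.mem_ker, h] at hc
    rw [hc, map_zero]
  · rw [← add_sub_cancel (u (ε a)) a]
    refine Submodule.add_mem_sup ⟨ε a, rfl⟩ ?_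
    rw [LinearMap.mem_ker, map_sub, h, sub_self]

mutual
  theorem ATree.one_le_deg : ∀ T : ATree X, 1 ≤ T.deg
    | .leaf => le_rfl
    | .graft F => Nat.le_add_left 1 F.deg
  theorem AForest.one_le_deg : ∀ F : AForest X, 1 ≤ F.deg
    | .single T => T.one_le_deg
    | .cons T _ _ => T.one_le_deg.trans (Nat.le_add_right _ _)
end

theorem AForest.deg_concatA (x : X) : ∀ F F' : AForest X,
    (concatA x F F').deg = F.deg + F'.deg
  | .single _, _ => rfl
  | .cons T _ G, F' => by
    simp only [concatA, AForest.deg, deg_concatA x G F', Nat.add_assoc]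

theorem AForest.eq_single_leaf_of_deg_le_one : ∀ {F : AForest X}, F.deg ≤ 1 →
    F = .single .leaf
  | .single .leaf, _ => rfl
  | .single (.graft F), h => by
    have := F.one_le_deg
    simp only [AForest.deg, ATree.deg] at h
    omega
  | .cons T _ G, h => by
    have := T.one_le_deg
    have := G.one_le_deg
    simp only [AForest.deg] at h
    omega

/-- `⋄ₐ` merges the roots of the last tree of `F` and the first tree of `F'`, so one vertex
is lost. -/
theorem mulT_mulF_mem_supported (lam : k) :
    (∀ T T' : ATree X,
      mulT lam T T' ∈ Finsupp.supported k k {G | G.deg + 1 ≤ T.deg + T'.deg}) ∧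
    (∀ F F' : AForest X,
      mulF lam F F' ∈ Finsupp.supported k k {G | G.deg + 1 ≤ F.deg + F'.deg}) := by
  refine mulT.mutual_induct _ _ ?_ ?_ ?_ ?_ ?_ ?_
  · intro T'
    rw [mulT]
    exact Finsupp.single_mem_supported k 1 (by simp [ATree.deg, Nat.add_comm])
  · intro T hT
    rw [mulT.eq_2 _ _ hT]
    exact Finsupp.single_mem_supported k 1 (by simp [ATree.deg])
  · intro F F' h₁ h₂ h₃
    rw [mulT]
    refine add_mem (add_mem ?_ ?_) (Submodule.smul_mem _ _ ?_)
    all_goals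
      refine Finsupp.mapDomain_mem_supported (fun G hG => ?_) ‹_›
      simp only [Set.mem_ofPred_eq, AForest.deg, ATree.deg] at hG ⊢
      omega
  · intro T T' h
    rw [mulF]
    exact Finsupp.mapDomain_mem_supported (f := AForest.single) (fun _ hG => hG) h
  · intro T T' y G' h
    rw [mulF]
    refine Finsupp.mapDomain_mem_supported (fun G hG => ?_) h
    simp only [Set.mem_ofPred_eq, AForest.deg] at hG ⊢
    omega
  · intro T x G F' h
    rw [mulF]
    refine Finsupp.mapDomain_mem_supported (fun G hG => ?_) h
    simp only [Set.mem_ofPred_eq, AForest.deg] at hG ⊢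
    omega

namespace RBF

theorem filtration_eq_supported (n : ℕ) :
    filtration k X n = Finsupp.supported k k {F | F.deg ≤ n + 1} := by
  rw [Finsupp.supported_eq_span_single, filtration]
  congr 1
  ext a
  simp [of, eq_comm]

theorem of_mem_filtration {n : ℕ} {F : AForest X} (h : F.deg ≤ n + 1) :
    (of F : RBF k X) ∈ filtration k X n :=
  Submodule.subset_span ⟨F, h, rfl⟩

theorem one_mem_filtration (n : ℕ) : (one : RBF k X) ∈ filtration k X n :=
  of_mem_filtration (by simp [AForest.deg, ATree.deg])

theorem filtration_mono : Monotone (filtration k X) := fun _ _ h =>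
  Submodule.span_mono fun _ ⟨F, hF, ha⟩ => ⟨F, hF.trans (by omega), ha⟩

theorem iSup_filtration : ⨆ n, filtration k X n = ⊤ := by
  rw [eq_top_iff, ← Finsupp.supported_univ, Finsupp.supported_eq_span_single, Submodule.span_le]
  rintro _ ⟨F, -, rfl⟩
  exact Submodule.mem_iSup_of_mem F.deg (of_mem_filtration (by omega))

theorem range_unit : LinearMap.range (unit : k →ₗ[k] RBF k X) = k ∙ one :=
  LinearMap.range_toSpanSingleton _

theorem eps_unit (c : k) : eps (unit c : RBF k X) = c := by
  simp [unit, eps, one]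

theorem range_unit_le_filtration (n : ℕ) :
    LinearMap.range (unit : k →ₗ[k] RBF k X) ≤ filtration k X n := by
  rw [range_unit, Submodule.span_singleton_le_iff_mem]
  exact one_mem_filtration n

theorem filtration_zero : filtration k X 0 = LinearMap.range (unit : k →ₗ[k] RBF k X) := by
  refine le_antisymm ?_ (range_unit_le_filtration 0)
  rw [range_unit, filtration, Submodule.span_le]
  rintro _ ⟨F, hF, rfl⟩
  rw [AForest.eq_single_leaf_of_deg_le_one hF]
  exact Submodule.mem_span_singleton_self _

theorem map₂_filtration_le {f : RBF k X →ₗ[k] RBF k X →ₗ[k] RBF k X} {p q m : ℕ}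
    (h : ∀ F F' : AForest X, F.deg ≤ p + 1 → F'.deg ≤ q + 1 →
      f (of F) (of F') ∈ filtration k X m) :
    Submodule.map₂ f (filtration k X p) (filtration k X q) ≤ filtration k X m := by
  rw [filtration, filtration, Submodule.map₂_span_span, Submodule.span_le]
  rintro _ ⟨_, ⟨F, hF, rfl⟩, _, ⟨F', hF', rfl⟩, rfl⟩
  exact h F F' hF hF'

theorem mul_of_of (lam : k) (F F' : AForest X) : mul lam (of F) (of F') = mulF lam F F' := by
  simp [mul, of]

theorem concat_of_of (x : X) (F F' : AForest X) :
    concat x (of F) (of F' : RBF k X) = of (concatA x F F') := by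
  simp [concat, of]

theorem Bplus_of (F : AForest X) : (Bplus (of F) : RBF k X) = of (.single (.graft F)) := by
  simp [Bplus, of]

theorem Delta_of (lam : k) (F : AForest X) : Delta lam (of F : RBF k X) = coF lam F := by
  simp [Delta, of]

theorem mul_mem_filtration (lam : k) {p q : ℕ} {a b : RBF k X} (ha : a ∈ filtration k X p)
    (hb : b ∈ filtration k X q) : mul lam a b ∈ filtration k X (p + q) := by
  refine map₂_filtration_le (fun F F' hF hF' => ?_) (Submodule.apply_mem_map₂ _ ha hb)
  rw [mul_of_of, filtration_eq_supported]
  refine Finsupp.supported_mono (fun G hG => ?_) ((mulT_mulF_mem_supported lam).2 F F')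
  simp only [Set.mem_ofPred_eq] at hG ⊢
  omega

theorem concat_mem_filtration (x : X) {p q : ℕ} {a b : RBF k X} (ha : a ∈ filtration k X p)
    (hb : b ∈ filtration k X q) : concat x a b ∈ filtration k X (p + q + 1) := by
  refine map₂_filtration_le (fun F F' hF hF' => ?_) (Submodule.apply_mem_map₂ _ ha hb)
  rw [concat_of_of]
  exact of_mem_filtration (by rw [AForest.deg_concatA]; omega)

theorem Bplus_mem_filtration {q : ℕ} {a : RBF k X} (ha : a ∈ filtration k X q) :
    Bplus a ∈ filtration k X (q + 1) := by
  refine (Submodule.span_le (p := (filtration k X (q + 1)).comap Bplus)).2 ?_ ha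
  rintro _ ⟨F, hF, rfl⟩
  rw [SetLike.mem_coe, Submodule.mem_comap, Bplus_of]
  exact of_mem_filtration (by simp only [AForest.deg, ATree.deg]; omega)

theorem coT_coF_mem_tensorFiltration (lam : k) :
    (∀ T : ATree X, coT lam T ∈ tensorFiltration (filtration k X) (T.deg - 1)) ∧
    (∀ F : AForest X, coF lam F ∈ tensorFiltration (filtration k X) (F.deg - 1)) := by
  refine coT.mutual_induct _ _ ?_ ?_ ?_ ?_
  · exact tmul_mem_tensorFiltration rfl (one_mem_filtration 0) (one_mem_filtration 0)
  · intro F hF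
    have hdeg : (ATree.graft F).deg - 1 = F.deg - 1 + 1 := by
      have := F.one_le_deg
      simp only [ATree.deg]
      omega
    rw [coT, hdeg]
    refine add_mem ?_ ?_
    · exact tmul_mem_tensorFiltration (add_zero _)
        (of_mem_filtration (by simp only [AForest.deg, ATree.deg]; omega)) (one_mem_filtration 0)
    · exact lTensor_mem_tensorFiltration (H := filtration k X) (i := 1)
        (fun _ _ => Bplus_mem_filtration) hF
  · intro T hT
    rwa [coF, AForest.deg]
  · intro T x F hT hF
    have hdeg : (AForest.cons T x F).deg - 1 = T.deg - 1 + (F.deg - 1) + 1 := by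
      have := T.one_le_deg
      have := F.one_le_deg
      simp only [AForest.deg]
      omega
    rw [coF, hdeg]
    exact add_mem
      (mixMap_mem_tensorFiltration (H := filtration k X) (i := 1) (j := 0)
        (fun _ _ _ ha _ hc => concat_mem_filtration x ha hc)
        (fun _ _ _ hb _ hd => (mul_mem_filtration lam hb hd :)) hT hF)
      (mixMap_mem_tensorFiltration (H := filtration k X) (i := 0) (j := 1)
        (fun _ _ _ ha _ hc => (mul_mem_filtration lam ha hc :))
        (fun _ _ _ hb _ hd => concat_mem_filtration x hb hd) hT hF)

theorem Delta_mem_tensorFiltration (lam : k) {n : ℕ} {a : RBF k X}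
    (ha : a ∈ filtration k X n) : Delta lam a ∈ tensorFiltration (filtration k X) n := by
  refine (Submodule.span_le
    (p := (tensorFiltration (filtration k X) n).comap (Delta lam))).2 ?_ ha
  rintro _ ⟨F, hF, rfl⟩
  rw [SetLike.mem_coe, Submodule.mem_comap, Delta_of]
  exact tensorFiltration_mono filtration_mono (by omega) ((coT_coF_mem_tensorFiltration lam).2 F)

end RBF

/-- With `Hⁿ` the `k`-span of the forests with at most `n + 1`
vertices, the bialgebra `(kF_X^a, ⋄ₐ, u, Δₐ, εₐ)` is connected cofiltered:
(a) `Hⁿ ⊆ Hⁿ⁺¹`; (b) `kF_X^a = ⋃ₙ Hⁿ`; (c) `Δₐ(Hⁿ) ⊆ Σ_{p+q=n} H^p ⊗ H^q`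
(image in `kF_X^a ⊗ kF_X^a`); (d) `Hⁿ = im(u) ⊕ (Hⁿ ∩ ker εₐ)`; (e) `H⁰ = im(u)`. -/
theorem rbf_connected_cofiltered (k X : Type) [CommRing k] (lam : k) :
    -- (a)
    (∀ n : ℕ, RBF.filtration k X n ≤ RBF.filtration k X (n + 1))
    -- (b)
    ∧ (⨆ n : ℕ, RBF.filtration k X n) = ⊤
    -- (c)
    ∧ (∀ n : ℕ, ∀ a ∈ RBF.filtration k X n,
        RBF.Delta lam a ∈
          ∑ pq ∈ Finset.HasAntidiagonal.antidiagonal n,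
            Submodule.map₂ (TensorProduct.mk k (RBF k X) (RBF k X))
              (RBF.filtration k X pq.1) (RBF.filtration k X pq.2))
    -- (d)
    ∧ (∀ n : ℕ,
        RBF.filtration k X n
            = LinearMap.range (RBF.unit : k →ₗ[k] RBF k X)
                ⊔ (RBF.filtration k X n ⊓ LinearMap.ker (RBF.eps : RBF k X →ₗ[k] k))
        ∧ Disjoint (LinearMap.range (RBF.unit : k →ₗ[k] RBF k X))
            (RBF.filtration k X n ⊓ LinearMap.ker (RBF.eps : RBF k X →ₗ[k] k)))
    -- (e)
    ∧ RBF.filtration k X 0 = LinearMap.range (RBF.unit : k →ₗ[k] RBF k X) := by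
  have hcompl := LinearMap.isCompl_range_ker_of_leftInverse (RBF.eps_unit (k := k) (X := X))
  refine ⟨fun n => RBF.filtration_mono n.le_succ, RBF.iSup_filtration,
    fun _ _ ha => RBF.Delta_mem_tensorFiltration lam ha, fun n => ⟨?_, ?_⟩,
    RBF.filtration_zero⟩
  · rw [inf_comm, ← sup_inf_assoc_of_le _ (RBF.range_unit_le_filtration (k := k) (X := X) n),
      hcompl.sup_eq_top, top_inf_eq]
  · exact hcompl.disjoint.mono_right inf_le_right
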